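/- arXiv:1609.01003 — 5 statements merged into one kernel-verified Lean document; each statement's English description precedes it below -/
import Mathlib

section
/- Let S be a finite set and let α, β, γ, δ be functions from the powerset of S to the nonnegative reals such that α(X₁)·β(X₂) ≤ γ(X₁ ∪ X₂)·δ(X₁ ∩ X₂) for all subsets X₁, X₂ ⊆ S. Then (∑_{X ⊆ S} α(X))·(∑_{X ⊆ S} β(X)) ≤ (∑_{X ⊆ S} γ(X))·(∑_{X ⊆ S} δ(X)). -/
/-- The four-functions theorem of Ahlswede and Daykin. -/
theorem ahlswede_daykin_four_functions {ι : Type*} [DecidableEq ι] (S : Finset ι)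
    (α β γ δ : Finset ι → ℝ)
    (hα : ∀ X ⊆ S, 0 ≤ α X) (hβ : ∀ X ⊆ S, 0 ≤ β X)
    (hγ : ∀ X ⊆ S, 0 ≤ γ X) (hδ : ∀ X ⊆ S, 0 ≤ δ X)
    (h : ∀ X₁ ⊆ S, ∀ X₂ ⊆ S, α X₁ * β X₂ ≤ γ (X₁ ∪ X₂) * δ (X₁ ∩ X₂)) :
    (∑ X ∈ S.powerset, α X) * (∑ X ∈ S.powerset, β X) ≤
      (∑ X ∈ S.powerset, γ X) * (∑ X ∈ S.powerset, δ X) := by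
  classical
  set α' : Finset ι → ℝ := fun X => if X ⊆ S then α X else 0 with hα'
  set β' : Finset ι → ℝ := fun X => if X ⊆ S then β X else 0 with hβ'
  set γ' : Finset ι → ℝ := fun X => if X ⊆ S then γ X else 0 with hγ'
  set δ' : Finset ι → ℝ := fun X => if X ⊆ S then δ X else 0 with hδ'
  have key := S.four_functions_theorem (f₁ := α') (f₂ := β') (f₃ := δ') (f₄ := γ')
    (fun X => by by_cases hX : X ⊆ S <;> simp [α', hX, hα X])
    (fun X => by by_cases hX : X ⊆ S <;> simp [β', hX, hβ X])
    (fun X => by by_cases hX : X ⊆ S <;> simp [δ', hX, hδ X])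
    (fun X => by by_cases hX : X ⊆ S <;> simp [γ', hX, hγ X])
    (fun s hs t ht => by
      simp only [α', β', γ', δ', if_pos hs, if_pos ht,
        if_pos (Finset.inter_subset_left.trans hs), if_pos (Finset.union_subset hs ht)]
      exact (h s hs t ht).trans_eq (mul_comm _ _))
    (𝒜 := S.powerset) (ℬ := S.powerset) Finset.Subset.rfl Finset.Subset.rfl
  rw [Finset.powerset_infs_powerset_self, Finset.powerset_sups_powerset_self] at key
  have e : ∀ f : Finset ι → ℝ, (∑ X ∈ S.powerset, (fun X => if X ⊆ S then f X else 0) X)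
      = ∑ X ∈ S.powerset, f X := fun f =>
    Finset.sum_congr rfl fun X hX => if_pos (Finset.mem_powerset.1 hX)
  rw [e α, e β, e δ, e γ] at key
  linarith [key]
end

section
/- Let T be a finite set, p_v ∈ [0,1] for each v ∈ T, and μ(X) = ∏_{v ∈ X} p_v · ∏_{v ∉ X} (1 - p_v). Suppose f, g : Set T → ℝ≥0 satisfy: f(X₁)·g(X₂) ≤ h(X₁ ∪ X₂) for all X₁, X₂ ⊆ T, where h : Set T → ℝ≥0. Then (∑_X μ(X) f(X))·(∑_X μ(X) g(X)) ≤ ∑_X μ(X) h(X), given that ∑_X μ(X) = 1. -/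
/-!
Writing `μ X = ∏ v ∈ T, (if v ∈ X then p v else 1 - p v)`, each factor of `μ X₁ * μ X₂` agrees
with the corresponding factor of `μ (X₁ ∩ X₂) * μ (X₁ ∪ X₂)`, so the product measure is
log-modular. Hence `μ f`, `μ g`, `μ`, `μ h` satisfy the hypothesis of the Ahlswede–Daykin four
functions theorem on the powerset of `T`, which gives
`(∑ μ f) (∑ μ g) ≤ (∑ μ) (∑ μ h) = ∑ μ h`.
-/

open Finset

namespace Finset

variable {ι M : Type*} [DecidableEq ι] [CommMonoid M]

theorem prod_ite_mem_eq_prod_mul_prod_sdiff {T X : Finset ι} (hX : X ⊆ T) (a b : ι → M) :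
    ∏ v ∈ T, (if v ∈ X then a v else b v) = (∏ v ∈ X, a v) * ∏ v ∈ T \ X, b v := by
  rw [prod_ite, filter_mem_eq_inter, inter_eq_right.2 hX, filter_not, filter_mem_eq_inter,
    inter_eq_right.2 hX]

theorem prod_ite_mem_inter_mul_prod_ite_mem_union (T X Y : Finset ι) (a b : ι → M) :
    (∏ v ∈ T, if v ∈ X ∩ Y then a v else b v) * ∏ v ∈ T, (if v ∈ X ∪ Y then a v else b v) =
      (∏ v ∈ T, if v ∈ X then a v else b v) * ∏ v ∈ T, (if v ∈ Y then a v else b v) := by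
  simp only [← prod_mul_distrib]
  refine prod_congr rfl fun v _ => ?_
  by_cases hX : v ∈ X <;> by_cases hY : v ∈ Y <;> simp [hX, hY, mul_comm]

end Finset

section FourFunctions

variable {α β : Type*} [DecidableEq α] [CommSemiring β] [LinearOrder β] [IsStrictOrderedRing β]
  [ExistsAddOfLE β]

theorem Finset.four_functions_theorem_powerset (u : Finset α) {f₁ f₂ f₃ f₄ : Finset α → β}
    (h₁ : ∀ s ⊆ u, 0 ≤ f₁ s) (h₂ : ∀ s ⊆ u, 0 ≤ f₂ s) (h₃ : ∀ s ⊆ u, 0 ≤ f₃ s)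
    (h₄ : ∀ s ⊆ u, 0 ≤ f₄ s)
    (h : ∀ s ⊆ u, ∀ t ⊆ u, f₁ s * f₂ t ≤ f₃ (s ∩ t) * f₄ (s ∪ t)) :
    (∑ s ∈ u.powerset, f₁ s) * ∑ s ∈ u.powerset, f₂ s ≤
      (∑ s ∈ u.powerset, f₃ s) * ∑ s ∈ u.powerset, f₄ s := by
  -- Precomposing with `· ∩ u` makes the functions nonnegative everywhere without changing them
  -- on `u.powerset`.
  have restrict (f : Finset α → β) : ∑ s ∈ u.powerset, f (s ∩ u) = ∑ s ∈ u.powerset, f s :=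
    sum_congr rfl fun s hs => by rw [inter_eq_left.2 (mem_powerset.1 hs)]
  have key := u.four_functions_theorem (f₁ := (f₁ <| · ∩ u)) (f₂ := (f₂ <| · ∩ u))
    (f₃ := (f₃ <| · ∩ u)) (f₄ := (f₄ <| · ∩ u))
    (fun s => h₁ _ inter_subset_right) (fun s => h₂ _ inter_subset_right)
    (fun s => h₃ _ inter_subset_right) (fun s => h₄ _ inter_subset_right)
    (fun s hs t ht => by
      simpa only [inter_eq_left.2 hs, inter_eq_left.2 ht,
        inter_eq_left.2 (inter_subset_left.trans hs), inter_eq_left.2 (union_subset hs ht)]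
        using h s hs t ht)
    subset_rfl subset_rfl
  rwa [powerset_infs_powerset_self, powerset_sups_powerset_self, restrict, restrict, restrict,
    restrict] at key

end FourFunctions

theorem four_functions_product_measure_general {ι : Type*} [DecidableEq ι] (T : Finset ι)
    (p : ι → ℝ) (hp : ∀ v ∈ T, 0 ≤ p v ∧ p v ≤ 1)
    (μ f g h : Finset ι → ℝ)
    (hμ : ∀ X ⊆ T, μ X = (∏ v ∈ X, p v) * ∏ v ∈ T \ X, (1 - p v))
    (hf : ∀ X ⊆ T, 0 ≤ f X) (hg : ∀ X ⊆ T, 0 ≤ g X)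
    (hfg : ∀ X₁ ⊆ T, ∀ X₂ ⊆ T, f X₁ * g X₂ ≤ h (X₁ ∪ X₂))
    (hsum : ∑ X ∈ T.powerset, μ X = 1) :
    (∑ X ∈ T.powerset, μ X * f X) * (∑ X ∈ T.powerset, μ X * g X) ≤
      ∑ X ∈ T.powerset, μ X * h X := by
  have hμ_prod : ∀ X ⊆ T, μ X = ∏ v ∈ T, if v ∈ X then p v else 1 - p v := fun X hX => by
    rw [hμ X hX, prod_ite_mem_eq_prod_mul_prod_sdiff hX]
  have hμ_nonneg : ∀ X ⊆ T, 0 ≤ μ X := fun X hX => by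
    rw [hμ_prod X hX]
    exact prod_nonneg fun v hv => by split_ifs <;> linarith [hp v hv]
  have hμ_modular : ∀ X₁ ⊆ T, ∀ X₂ ⊆ T, μ X₁ * μ X₂ = μ (X₁ ∩ X₂) * μ (X₁ ∪ X₂) :=
    fun X₁ h₁ X₂ h₂ => by
      rw [hμ_prod _ h₁, hμ_prod _ h₂, hμ_prod _ (inter_subset_left.trans h₁),
        hμ_prod _ (union_subset h₁ h₂), prod_ite_mem_inter_mul_prod_ite_mem_union]
  -- `h X = h (X ∪ X) ≥ f X * g X`
  have hh : ∀ X ⊆ T, 0 ≤ h X := fun X hX => by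
    simpa using (mul_nonneg (hf X hX) (hg X hX)).trans (hfg X hX X hX)
  have key := T.four_functions_theorem_powerset (f₃ := μ)
    (fun X hX => mul_nonneg (hμ_nonneg X hX) (hf X hX))
    (fun X hX => mul_nonneg (hμ_nonneg X hX) (hg X hX)) hμ_nonneg
    (fun X hX => mul_nonneg (hμ_nonneg X hX) (hh X hX))
    (fun X₁ h₁ X₂ h₂ => calc
      μ X₁ * f X₁ * (μ X₂ * g X₂) = μ (X₁ ∩ X₂) * μ (X₁ ∪ X₂) * (f X₁ * g X₂) := by
        rw [← hμ_modular X₁ h₁ X₂ h₂]; ring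
      _ ≤ μ (X₁ ∩ X₂) * μ (X₁ ∪ X₂) * h (X₁ ∪ X₂) := by
        gcongr
        · exact mul_nonneg (hμ_nonneg _ (inter_subset_left.trans h₁))
            (hμ_nonneg _ (union_subset h₁ h₂))
        · exact hfg X₁ h₁ X₂ h₂
      _ = μ (X₁ ∩ X₂) * (μ (X₁ ∪ X₂) * h (X₁ ∪ X₂)) := mul_assoc _ _ _)
  rwa [hsum, one_mul] at key

/-- Application of the four-functions theorem to a product measure `μ`. -/
theorem four_functions_product_measure {ι : Type*} [DecidableEq ι] (T : Finset ι)
    (p : ι → ℝ) (hp : ∀ v ∈ T, 0 ≤ p v ∧ p v ≤ 1)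
    (μ f g h : Finset ι → ℝ)
    (hμ : ∀ X ⊆ T, μ X = (∏ v ∈ X, p v) * ∏ v ∈ T \ X, (1 - p v))
    (hf : ∀ X ⊆ T, 0 ≤ f X) (hg : ∀ X ⊆ T, 0 ≤ g X) (hh : ∀ X ⊆ T, 0 ≤ h X)
    (hfg : ∀ X₁ ⊆ T, ∀ X₂ ⊆ T, f X₁ * g X₂ ≤ h (X₁ ∪ X₂))
    (hsum : ∑ X ∈ T.powerset, μ X = 1) :
    (∑ X ∈ T.powerset, μ X * f X) * (∑ X ∈ T.powerset, μ X * g X) ≤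
      ∑ X ∈ T.powerset, μ X * h X :=
  four_functions_product_measure_general T p hp μ f g h hμ hf hg hfg hsum
end

section
/- Let G = (V,E) be a finite undirected graph with V ⊆ ℕ, and let p : E → [0,1]. Form a random orientation of G by orienting each edge e = {a,b} with a < b from a to b with probability p(e) and from b to a otherwise, independently over edges. For any three vertices s, a, b ∈ V, P(s → a and s → b) ≥ P(s → a) · P(s → b), where x → y denotes the event that the random orientation contains a directed path from x to y. -/
/-!
Reveal the orientations of the edges one at a time, always choosing an unrevealed edge with an
endpoint `u` that is already reached from `s` along revealed edges. Orienting this edge away from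
`u` can only create paths from `s`, so, given what has been revealed, the conditional
probabilities of `s → a` and of `s → b` both increase with the same coin, and the two-point
Chebyshev inequality carries the correlation inequality through the revealing step. When no such
edge is left, the set of vertices reached from `s` is already determined, and both events are
deterministic.
-/

open Classical Finset

noncomputable section

variable {V : Type*} [Fintype V] [LinearOrder V]

/-- An orientation of the edges of `G`: `true` on edge `e = {u,v}` (with `u < v`)
means the edge is oriented from `u` to `v` (min to max). -/
def Orient (G : SimpleGraph V) : Type _ := ↥G.edgeFinset → Bool

instance (G : SimpleGraph V) : Fintype (Orient G) := by unfold Orient; infer_instance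

/-- The edge `{u,v}` exists and is oriented from `u` to `v` in `ω`. -/
def step (G : SimpleGraph V) (ω : Orient G) (u v : V) : Prop :=
  ∃ h : G.Adj u v,
    ω ⟨s(u, v), SimpleGraph.mem_edgeFinset.mpr ((SimpleGraph.mem_edgeSet G).mpr h)⟩ = decide (u < v)

/-- There is a directed path from `x` to `y` in the orientation `ω`. -/
def reaches (G : SimpleGraph V) (ω : Orient G) (x y : V) : Prop :=
  Relation.ReflTransGen (step G ω) x y

/-- The probability of the orientation `ω` under independent `p`-biased coin flips. -/
def wt (G : SimpleGraph V) (p : Sym2 V → ℝ) (ω : Orient G) : ℝ :=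
  ∏ e : G.edgeFinset, if ω e then p e else 1 - p e

/-- Probability of an event under the `p`-biased random orientation measure. -/
def Pr (G : SimpleGraph V) (p : Sym2 V → ℝ) (A : Set (Orient G)) : ℝ :=
  ∑ ω : Orient G, A.indicator (wt G p) ω

open Function

theorem eqOn_update_compl_iff {ι β : Type*} [DecidableEq ι] {F : Finset ι} {i : ι} (hi : i ∉ F)
    (η ρ : ι → β) (b : β) :
    Set.EqOn η (update ρ i b) (↑F)ᶜ ↔ Set.EqOn η ρ (↑(insert i F))ᶜ ∧ η i = b := by
  simp only [Set.EqOn, Finset.coe_insert, Set.mem_compl_iff, Finset.mem_coe, Set.mem_insert_iff,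
    not_or, and_imp]
  constructor
  · intro h
    exact ⟨fun j hji hj => by simpa [hji] using h hj, by simpa using h hi⟩
  · rintro ⟨h, rfl⟩ j hj
    by_cases hji : j = i
    · simp [hji]
    · simpa [hji] using h hji hj

theorem two_point_chebyshev {a c x₁ x₀ y₁ y₀ : ℝ} (ha : 0 ≤ a) (hc : 0 ≤ c) (hac : a + c = 1)
    (h : 0 ≤ (x₁ - x₀) * (y₁ - y₀)) :
    (a * x₁ + c * x₀) * (a * y₁ + c * y₀) ≤ a * (x₁ * y₁) + c * (x₀ * y₀) := by
  have key : a * (x₁ * y₁) + c * (x₀ * y₀) - (a * x₁ + c * x₀) * (a * y₁ + c * y₀)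
      = a * c * ((x₁ - x₀) * (y₁ - y₀)) := by
    rw [show c = 1 - a by linarith]; ring
  linarith [mul_nonneg (mul_nonneg ha hc) h]

section PartialExpectation

variable {ι : Type*} [Fintype ι] [DecidableEq ι] {w : ι → Bool → ℝ}

variable (w) in
/-- Expectation of `f` when the coordinates in `F` are drawn independently, with
`w i b` the probability that coordinate `i` takes the value `b`, and the others are frozen
to their values in `ρ`. -/
def partialExp (F : Finset ι) (ρ : ι → Bool) (f : (ι → Bool) → ℝ) : ℝ :=
  ∑ η : ι → Bool, if Set.EqOn η ρ (↑F)ᶜ then (∏ i ∈ F, w i (η i)) * f η else 0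

theorem partialExp_empty (ρ : ι → Bool) (f : (ι → Bool) → ℝ) : partialExp w ∅ ρ f = f ρ := by
  rw [partialExp, Finset.sum_eq_single ρ]
  · simp
  · intro η _ hη
    rw [if_neg]
    simpa [Set.eqOn_univ] using hη
  · simp

theorem partialExp_insert {F : Finset ι} {i : ι} (hi : i ∉ F) (ρ : ι → Bool)
    (f : (ι → Bool) → ℝ) :
    partialExp w (insert i F) ρ f =
      w i true * partialExp w F (update ρ i true) f +
        w i false * partialExp w F (update ρ i false) f := by
  simp only [partialExp, Finset.mul_sum, ← Finset.sum_add_distrib]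
  refine Finset.sum_congr rfl fun η _ => ?_
  simp only [eqOn_update_compl_iff hi, Finset.prod_insert hi]
  cases η i <;> simp [mul_assoc]

theorem partialExp_update {F : Finset ι} {i : ι} (hi : i ∉ F) (ρ : ι → Bool) (b : Bool)
    (f : (ι → Bool) → ℝ) :
    partialExp w F (update ρ i b) f = partialExp w F ρ (fun η => f (update η i b)) := by
  induction F using Finset.induction_on generalizing ρ with
  | empty => simp only [partialExp_empty]
  | insert j F hj ih =>
    have hij : i ≠ j := fun h => hi (h ▸ Finset.mem_insert_self i F)
    have hiF : i ∉ F := fun h => hi (Finset.mem_insert_of_mem h)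
    simp only [partialExp_insert hj, update_comm hij, ih hiF]

theorem partialExp_mono (hw : ∀ i b, 0 ≤ w i b) {F : Finset ι} {ρ : ι → Bool}
    {f g : (ι → Bool) → ℝ} (h : ∀ η, Set.EqOn η ρ (↑F)ᶜ → f η ≤ g η) :
    partialExp w F ρ f ≤ partialExp w F ρ g :=
  Finset.sum_le_sum fun η _ => by
    split_ifs with hη
    · exact mul_le_mul_of_nonneg_left (h η hη) (Finset.prod_nonneg fun i _ => hw i _)
    · exact le_rfl

theorem partialExp_const (hw : ∀ i, w i true + w i false = 1) (F : Finset ι) (ρ : ι → Bool)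
    (c : ℝ) : partialExp w F ρ (fun _ => c) = c := by
  induction F using Finset.induction_on generalizing ρ with
  | empty => exact partialExp_empty ρ _
  | insert i F hi ih => simp only [partialExp_insert hi, ih, ← add_mul, hw, one_mul]

theorem partialExp_eq_of_eqOn (hw : ∀ i, w i true + w i false = 1) {F : Finset ι}
    {ρ : ι → Bool} {f : (ι → Bool) → ℝ} (h : ∀ η, Set.EqOn η ρ (↑F)ᶜ → f η = f ρ) :
    partialExp w F ρ f = f ρ :=
  (Finset.sum_congr rfl fun η _ => by split_ifs with hη <;> [rw [h η hη]; rfl]).trans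
    (partialExp_const hw F ρ (f ρ))

theorem partialExp_mul_le_of_exploration (hw₀ : ∀ i b, 0 ≤ w i b)
    (hw₁ : ∀ i, w i true + w i false = 1) {κ : Type*} (f : κ → (ι → Bool) → ℝ)
    (hf : ∀ (F : Finset ι) (ρ : ι → Bool),
      (∀ k η, Set.EqOn η ρ (↑F)ᶜ → f k η = f k ρ) ∨
      ∃ i ∈ F, ∃ b, ∀ k η, Set.EqOn η ρ (↑F)ᶜ → f k (update η i (!b)) ≤ f k (update η i b))
    (F : Finset ι) (ρ : ι → Bool) (k l : κ) :
    partialExp w F ρ (f k) * partialExp w F ρ (f l) ≤ partialExp w F ρ (f k * f l) := by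
  induction F using Finset.strongInduction generalizing ρ with
  | H F ih =>
  rcases hf F ρ with hconst | ⟨i, hi, b, hmono⟩
  · have hkl : ∀ η, Set.EqOn η ρ (↑F)ᶜ → (f k * f l) η = (f k * f l) ρ := fun η hη => by
      simp only [Pi.mul_apply, hconst k η hη, hconst l η hη]
    rw [partialExp_eq_of_eqOn hw₁ (hconst k), partialExp_eq_of_eqOn hw₁ (hconst l),
      partialExp_eq_of_eqOn hw₁ hkl, Pi.mul_apply]
  · set F' := F.erase i
    have hi' : i ∉ F' := Finset.notMem_erase i F
    have hreveal : ∀ k, partialExp w F' (update ρ i (!b)) (f k) ≤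
        partialExp w F' (update ρ i b) (f k) := fun k => by
      rw [partialExp_update hi', partialExp_update hi']
      refine partialExp_mono hw₀ fun η hη => hmono k η (hη.mono ?_)
      exact Set.compl_subset_compl.mpr (Finset.coe_subset.mpr (Finset.erase_subset i F))
    have hcov : 0 ≤ (partialExp w F' (update ρ i true) (f k) -
          partialExp w F' (update ρ i false) (f k)) *
        (partialExp w F' (update ρ i true) (f l) - partialExp w F' (update ρ i false) (f l)) := by
      cases b
      · exact mul_nonneg_of_nonpos_of_nonpos (sub_nonpos.mpr (hreveal k))
          (sub_nonpos.mpr (hreveal l))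
      · exact mul_nonneg (sub_nonneg.mpr (hreveal k)) (sub_nonneg.mpr (hreveal l))
    have hIH := fun c => ih F' (Finset.erase_ssubset hi) (update ρ i c)
    rw [← Finset.insert_erase hi, partialExp_insert hi', partialExp_insert hi',
      partialExp_insert hi']
    calc _ ≤ _ := two_point_chebyshev (hw₀ i true) (hw₀ i false) (hw₁ i) hcov
      _ ≤ _ := add_le_add (mul_le_mul_of_nonneg_left (hIH true) (hw₀ i true))
          (mul_le_mul_of_nonneg_left (hIH false) (hw₀ i false))

theorem partialExp_indicator_mul_le_of_exploration (hw₀ : ∀ i b, 0 ≤ w i b)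
    (hw₁ : ∀ i, w i true + w i false = 1) {κ : Type*} (A : κ → Set (ι → Bool))
    (hA : ∀ (F : Finset ι) (ρ : ι → Bool),
      (∀ k η, Set.EqOn η ρ (↑F)ᶜ → (η ∈ A k ↔ ρ ∈ A k)) ∨
      ∃ i ∈ F, ∃ b, ∀ k η, Set.EqOn η ρ (↑F)ᶜ → update η i (!b) ∈ A k → update η i b ∈ A k)
    (F : Finset ι) (ρ : ι → Bool) (k l : κ) :
    partialExp w F ρ ((A k).indicator 1) * partialExp w F ρ ((A l).indicator 1) ≤
      partialExp w F ρ ((A k ∩ A l).indicator 1) := by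
  rw [Set.inter_indicator_one]
  refine partialExp_mul_le_of_exploration hw₀ hw₁ (fun k => (A k).indicator 1)
    (fun F ρ => (hA F ρ).imp (fun h k η hη => ?_) ?_) F ρ k l
  · simp only [Set.indicator_apply, h k η hη, Pi.one_apply]
  · rintro ⟨i, hi, b, h⟩
    refine ⟨i, hi, b, fun k η hη => ?_⟩
    by_cases hmem : update η i (!b) ∈ A k
    · simp only [Set.indicator_of_mem hmem, Set.indicator_of_mem (h k η hη hmem), Pi.one_apply,
        le_refl]
    · simp only [Set.indicator_of_notMem hmem, Set.indicator_apply]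
      split_ifs <;> norm_num

end PartialExpectation

section RandomOrientation

variable {G : SimpleGraph V}

def adjEdge {u v : V} (h : G.Adj u v) : G.edgeFinset := ⟨s(u, v), G.mem_edgeFinset.mpr h⟩

/-- Vertices reached from `s` along edges outside `F`, oriented as in `ρ`: these are reached
in every orientation that agrees with `ρ` off `F`. -/
def cluster (F : Finset G.edgeFinset) (ρ : G.edgeFinset → Bool) (s : V) : Set V :=
  {x | Relation.ReflTransGen
    (fun u v => ∃ h : G.Adj u v, adjEdge h ∉ F ∧ ρ (adjEdge h) = decide (u < v)) s x}

theorem reaches_of_mem_cluster {F : Finset G.edgeFinset} {ρ η : G.edgeFinset → Bool} {s x : V}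
    (hη : Set.EqOn η ρ (↑F)ᶜ) (hx : x ∈ cluster F ρ s) : reaches G η s x :=
  Relation.ReflTransGen.mono (fun _ _ ⟨h, hF, hρ⟩ => ⟨h, (hη hF).trans hρ⟩) _ _ hx

theorem mem_cluster_of_reaches {F : Finset G.edgeFinset} {ρ η : G.edgeFinset → Bool} {s x : V}
    (hF : ∀ e ∈ F, ∀ u ∈ cluster F ρ s, u ∉ (e : Sym2 V)) (hη : Set.EqOn η ρ (↑F)ᶜ)
    (hx : reaches G η s x) : x ∈ cluster F ρ s := by
  induction hx with
  | refl => exact .refl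
  | tail _ hstep ih =>
    obtain ⟨hadj, hdir⟩ := hstep
    have he : adjEdge hadj ∉ F := fun he => hF _ he _ ih (Sym2.mem_mk_left _ _)
    exact ih.tail ⟨hadj, he, (hη he).symm.trans hdir⟩

/-- Orienting the edge `uv` from `u` to `v` destroys no path from `s`, as long as `u` is still
reached: a path through `vu` can be cut short at `u`. -/
theorem reaches_update_of_reaches {η : G.edgeFinset → Bool} {s t u v : V} (huv : G.Adj u v)
    (hu : reaches G (update η (adjEdge huv) (decide (u < v))) s u) (ht : reaches G η s t) :
    reaches G (update η (adjEdge huv) (decide (u < v))) s t := by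
  induction ht with
  | refl => exact .refl
  | tail _ hstep ih =>
    obtain ⟨hyz, hdir⟩ := hstep
    by_cases he : adjEdge hyz = adjEdge huv
    · rcases Sym2.eq_iff.mp (congrArg Subtype.val he) with ⟨rfl, rfl⟩ | ⟨rfl, rfl⟩
      · exact ih.tail ⟨hyz, update_self (adjEdge huv) _ η⟩
      · exact hu
    · exact ih.tail ⟨hyz, (update_of_ne he _ η).trans hdir⟩

theorem reaches_determined_or_monotone (F : Finset G.edgeFinset) (ρ : G.edgeFinset → Bool)
    (s : V) :
    (∀ t η, Set.EqOn η ρ (↑F)ᶜ → (reaches G η s t ↔ reaches G ρ s t)) ∨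
      ∃ e ∈ F, ∃ b, ∀ t η, Set.EqOn η ρ (↑F)ᶜ →
        reaches G (update η e (!b)) s t → reaches G (update η e b) s t := by
  by_cases hexp : ∃ e ∈ F, ∃ u ∈ cluster F ρ s, u ∈ (e : Sym2 V)
  · obtain ⟨⟨e, he⟩, heF, u, hu, hue⟩ := hexp
    obtain ⟨v, rfl⟩ := Sym2.mem_iff_exists.mp hue
    have huv : G.Adj u v := G.mem_edgeFinset.mp he
    refine .inr ⟨adjEdge huv, heF, decide (u < v), fun t η hη ht => ?_⟩
    have hout : Set.EqOn (update η (adjEdge huv) (decide (u < v))) ρ (↑F)ᶜ := fun e' he' =>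
      (update_of_ne (ne_of_mem_of_not_mem heF he').symm _ η).trans (hη he')
    have hreach := reaches_update_of_reaches
      (η := update η (adjEdge huv) (!decide (u < v))) huv ?_ ht
    · simpa only [update_idem] using hreach
    · simpa only [update_idem] using reaches_of_mem_cluster hout hu
  · push Not at hexp
    have hcl : ∀ t η, Set.EqOn η ρ (↑F)ᶜ → (reaches G η s t ↔ t ∈ cluster F ρ s) :=
      fun t η hη => ⟨mem_cluster_of_reaches hexp hη, reaches_of_mem_cluster hη⟩
    exact .inl fun t η hη => (hcl t η hη).trans (hcl t ρ (Set.eqOn_refl ρ _)).symm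

end RandomOrientation

def coinWeight (q : ℝ) (b : Bool) : ℝ := if b then q else 1 - q

theorem coinWeight_nonneg {q : ℝ} (hq : 0 ≤ q ∧ q ≤ 1) (b : Bool) : 0 ≤ coinWeight q b := by
  cases b <;> simp [coinWeight, hq.1, hq.2]

theorem coinWeight_true_add_false (q : ℝ) : coinWeight q true + coinWeight q false = 1 := by
  simp [coinWeight]

theorem pr_eq_partialExp (G : SimpleGraph V) (p : Sym2 V → ℝ) (A : Set (Orient G))
    (ρ : G.edgeFinset → Bool) :
    Pr G p A = partialExp (fun e : G.edgeFinset => coinWeight (p e)) univ ρ (A.indicator 1) :=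
  Finset.sum_congr rfl fun η _ => by
    simp [Set.indicator_apply, Set.EqOn, wt, coinWeight]

/-- Connection events from a common source are positively correlated in a
`p`-biased random orientation of a finite graph. -/
theorem connections_positively_correlated (G : SimpleGraph V) (p : Sym2 V → ℝ)
    (hp : ∀ e ∈ G.edgeSet, 0 ≤ p e ∧ p e ≤ 1) (s a b : V) :
    Pr G p {ω | reaches G ω s a ∧ reaches G ω s b} ≥
      Pr G p {ω | reaches G ω s a} * Pr G p {ω | reaches G ω s b} := by
  have hcorr := partialExp_indicator_mul_le_of_exploration
    (fun e : G.edgeFinset => coinWeight_nonneg (hp e (G.mem_edgeFinset.mp e.2)))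
    (fun e => coinWeight_true_add_false _) (fun t => {ω | reaches G ω s t})
    (fun F ρ => reaches_determined_or_monotone F ρ s) univ (fun _ => true) a b
  simp only [ge_iff_le, Set.ofPred_and, pr_eq_partialExp G p _ (fun _ => true)]
  exact hcorr
end
end

section
/- Let G = (V,E) be a finite undirected graph with V ⊆ ℕ and let p : E → [0,1], with the random orientation model as above. For any nonempty set S ⊆ V and any two vertices a, b ∈ V, P(S → a and S → b) ≥ P(S → a) · P(S → b), where S → x denotes the event that some vertex of S has a directed path to x in the random orientation. -/
/-
Induction on the number of edges. If no edge leaves `S`, then `S → x` holds exactly when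
`x ∈ S`, so both events are deterministic. Otherwise pick an edge `uv` with `u ∈ S` and
condition on its orientation, with `w` the probability of `u → v`. Given `u → v`, the event
`S → x` is `S ∪ {v} → x` in `G - uv`; given `v → u`, it is `S → x` in `G - uv`. Writing `x₁, x₂`
and `y₁, y₂` for the conditional probabilities of `S → a` and `S → b`, induction gives
`P(S → a, S → b) ≥ w x₁ y₁ + (1 - w) x₂ y₂`, and since `x₂ ≤ x₁` and `y₂ ≤ y₁` this is at least
`(w x₁ + (1 - w) x₂)(w y₁ + (1 - w) y₂)`, the difference being `w (1 - w)(x₁ - x₂)(y₁ - y₂)`.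
-/

open Classical Finset

noncomputable section

variable {V : Type*} [Fintype V] [LinearOrder V]

-- Keeps `(G.deleteEdges s).edgeFinset` on the classical instance, so that it agrees with the one
-- it gets when `G.deleteEdges s` is the graph of a recursive call of the main theorem.
attribute [-instance] SimpleGraph.instDecidableRelAdjDeleteEdgesOfDecidablePredSym2MemSetOfDecidableEq

section Probability

variable {G : SimpleGraph V} {p : Sym2 V → ℝ}

omit [LinearOrder V] in
lemma wt_nonneg (hp : ∀ e ∈ G.edgeSet, 0 ≤ p e ∧ p e ≤ 1) (ω : Orient G) : 0 ≤ wt G p ω :=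
  prod_nonneg fun e _ => by
    obtain ⟨h0, h1⟩ := hp e (SimpleGraph.mem_edgeFinset.mp e.2)
    split <;> linarith

lemma Pr_mono (hp : ∀ e ∈ G.edgeSet, 0 ≤ p e ∧ p e ≤ 1) {A B : Set (Orient G)} (h : A ⊆ B) :
    Pr G p A ≤ Pr G p B :=
  sum_le_sum fun ω _ => Set.indicator_le_indicator_of_subset h (wt_nonneg hp) ω

lemma Pr_univ : Pr G p Set.univ = 1 := by
  rw [Pr, Set.indicator_univ]
  have h := Fintype.prod_sum fun (e : G.edgeFinset) (b : Bool) => if b then p e else 1 - p e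
  simp only [Fintype.sum_bool, if_true, Bool.false_eq_true, if_false, add_sub_cancel,
    prod_const_one] at h
  exact h.symm

lemma Pr_setOf_const (P : Prop) : Pr G p {_ω | P} = if P then 1 else 0 := by
  by_cases h : P
  · simp only [h, Set.ofPred_true, Pr_univ, if_true]
  · simp [h, Pr]

end Probability

namespace SimpleGraph

variable {G : SimpleGraph V}

omit [LinearOrder V] in
lemma mem_edgeFinset_deleteEdges_singleton {e f : Sym2 V} :
    f ∈ (G.deleteEdges {e}).edgeFinset ↔ f ∈ G.edgeFinset ∧ f ≠ e := by
  simp [mem_edgeFinset]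

lemma card_edgeFinset_deleteEdges_lt {u v : V} (huv : G.Adj u v) :
    (G.deleteEdges {s(u, v)}).edgeFinset.card < G.edgeFinset.card := by
  have h : (G.deleteEdges {s(u, v)}).edgeFinset = G.edgeFinset.erase s(u, v) := by
    ext e
    rw [mem_edgeFinset_deleteEdges_singleton, mem_erase, and_comm]
  rw [h]
  exact card_erase_lt_of_mem (G.mem_edgeFinset.2 huv)

end SimpleGraph

namespace Orient

variable {G : SimpleGraph V} (e : Sym2 V)

def restrict (ω : Orient G) : Orient (G.deleteEdges {e}) :=
  fun f => ω ⟨f, (SimpleGraph.mem_edgeFinset_deleteEdges_singleton.1 f.2).1⟩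

def extend (b : Bool) (ω' : Orient (G.deleteEdges {e})) : Orient G :=
  fun f => if h : f.1 = e then b
    else ω' ⟨f, SimpleGraph.mem_edgeFinset_deleteEdges_singleton.2 ⟨f.2, h⟩⟩

@[simp]
lemma restrict_extend (b : Bool) (ω' : Orient (G.deleteEdges {e})) :
    restrict e (extend e b ω') = ω' :=
  funext fun f => dif_neg (SimpleGraph.mem_edgeFinset_deleteEdges_singleton.1 f.2).2

variable {e}

lemma extend_apply_of_eq {b : Bool} {ω' : Orient (G.deleteEdges {e})} {f : G.edgeFinset}
    (hf : f.1 = e) : extend e b ω' f = b :=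
  dif_pos hf

def equivBoolProd (he : e ∈ G.edgeFinset) : Bool × Orient (G.deleteEdges {e}) ≃ Orient G where
  toFun x := extend e x.1 x.2
  invFun ω := (ω ⟨e, he⟩, restrict e ω)
  left_inv := fun ⟨b, ω'⟩ => Prod.ext (extend_apply_of_eq rfl) (restrict_extend e b ω')
  right_inv ω := funext fun f => by
    by_cases h : f.1 = e
    · obtain rfl : f = ⟨e, he⟩ := Subtype.ext h
      exact extend_apply_of_eq rfl
    · exact dif_neg h

def edgesNeEquiv (he : e ∈ G.edgeFinset) :
    {f : G.edgeFinset // f ≠ ⟨e, he⟩} ≃ (G.deleteEdges {e}).edgeFinset where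
  toFun f := ⟨f.1, SimpleGraph.mem_edgeFinset_deleteEdges_singleton.2
    ⟨f.1.2, fun h => f.2 (Subtype.ext h)⟩⟩
  invFun f := ⟨⟨f, (SimpleGraph.mem_edgeFinset_deleteEdges_singleton.1 f.2).1⟩,
    fun h => (SimpleGraph.mem_edgeFinset_deleteEdges_singleton.1 f.2).2 (congrArg Subtype.val h)⟩
  left_inv _ := rfl
  right_inv _ := rfl

lemma wt_extend (p : Sym2 V → ℝ) (he : e ∈ G.edgeFinset) (b : Bool)
    (ω' : Orient (G.deleteEdges {e})) :
    wt G p (extend e b ω') = (if b then p e else 1 - p e) * wt (G.deleteEdges {e}) p ω' := by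
  rw [wt, Fintype.prod_eq_mul_prod_subtype_ne _ ⟨e, he⟩, wt]
  congr 1
  · simp [extend]
  refine Fintype.prod_equiv (edgesNeEquiv he) _ _ fun f => ?_
  have hf : f.1.1 ≠ e := fun h => f.2 (Subtype.ext h)
  simp only [extend, dif_neg hf]
  rfl

lemma Pr_eq_sum_extend (p : Sym2 V → ℝ) (he : e ∈ G.edgeFinset) (A : Set (Orient G)) :
    Pr G p A = ∑ b : Bool, (if b then p e else 1 - p e) *
      Pr (G.deleteEdges {e}) p {ω' | extend e b ω' ∈ A} := by
  rw [Pr, ← (equivBoolProd he).sum_comp, Fintype.sum_prod_type]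
  refine sum_congr rfl fun b _ => ?_
  rw [Pr, mul_sum]
  refine sum_congr rfl fun ω' _ => ?_
  change A.indicator (wt G p) (extend e b ω') = _
  by_cases h : extend e b ω' ∈ A
  · simp [h, wt_extend p he]
  · simp [h]

lemma step_extend_iff {b : Bool} {ω' : Orient (G.deleteEdges {e})} {x y : V} (hxy : G.Adj x y)
    (he : s(x, y) = e) : step G (extend e b ω') x y ↔ b = decide (x < y) :=
  ⟨fun ⟨_, h⟩ => by rwa [extend_apply_of_eq he] at h,
    fun h => ⟨hxy, by rw [extend_apply_of_eq he, h]⟩⟩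

end Orient

/-- The probability that the edge `uv` is oriented from `u` to `v`. -/
def stepProb (p : Sym2 V → ℝ) (u v : V) : ℝ :=
  if u < v then p s(u, v) else 1 - p s(u, v)

omit [Fintype V] in
lemma stepProb_nonneg {p : Sym2 V → ℝ} {u v : V} (hp : 0 ≤ p s(u, v) ∧ p s(u, v) ≤ 1) :
    0 ≤ stepProb p u v := by
  unfold stepProb
  split_ifs <;> linarith

omit [Fintype V] in
lemma stepProb_le_one {p : Sym2 V → ℝ} {u v : V} (hp : 0 ≤ p s(u, v) ∧ p s(u, v) ≤ 1) :
    stepProb p u v ≤ 1 := by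
  unfold stepProb
  split_ifs <;> linarith

lemma Pr_eq_of_adj {G : SimpleGraph V} (p : Sym2 V → ℝ) {u v : V} (huv : G.Adj u v)
    (A : Set (Orient G)) (B C : Set (Orient (G.deleteEdges {s(u, v)})))
    (hB : ∀ ω, step G ω u v → (ω ∈ A ↔ Orient.restrict s(u, v) ω ∈ B))
    (hC : ∀ ω, step G ω v u → (ω ∈ A ↔ Orient.restrict s(u, v) ω ∈ C)) :
    Pr G p A = stepProb p u v * Pr (G.deleteEdges {s(u, v)}) p B +
      (1 - stepProb p u v) * Pr (G.deleteEdges {s(u, v)}) p C := by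
  have hpreimage : ∀ b, {ω' | Orient.extend s(u, v) b ω' ∈ A} =
      if b = decide (u < v) then B else C := by
    intro b
    ext ω'
    split_ifs with hb
    · simpa using hB _ ((Orient.step_extend_iff huv rfl).2 hb)
    · refine (hC _ ((Orient.step_extend_iff huv.symm Sym2.eq_swap).2 ?_)).trans (by simp)
      rcases huv.ne.lt_or_gt with h | h <;> cases b <;> simp_all [h.not_gt]
  rw [Orient.Pr_eq_sum_extend p (G.mem_edgeFinset.2 (G.mem_edgeSet.2 huv)), Fintype.sum_bool,
    hpreimage, hpreimage]
  rcases huv.ne.lt_or_gt with h | h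
  · simp [stepProb, h]
  · simp [stepProb, h.not_gt]
    ring

def reachEvent (G : SimpleGraph V) (S : Finset V) (x : V) : Set (Orient G) :=
  {ω | ∃ s ∈ S, reaches G ω s x}

section Reachability

variable {G : SimpleGraph V} {ω : Orient G}

lemma step_asymm {x y : V} (h : step G ω x y) : ¬step G ω y x := by
  rintro ⟨hyx, hval'⟩
  obtain ⟨hxy, hval⟩ := h
  have hdecide : decide (x < y) = decide (y < x) :=
    hval.symm.trans ((congrArg ω (Subtype.ext Sym2.eq_swap)).trans hval')
  rcases hxy.ne.lt_or_gt with hlt | hlt <;> simp [hlt, hlt.not_gt] at hdecide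

lemma step_restrict_iff {e : Sym2 V} {x y : V} :
    step (G.deleteEdges {e}) (Orient.restrict e ω) x y ↔ step G ω x y ∧ s(x, y) ≠ e := by
  simp only [step, SimpleGraph.deleteEdges_adj, Set.mem_singleton_iff]
  exact ⟨fun ⟨⟨hadj, hne⟩, hval⟩ => ⟨⟨hadj, hval⟩, hne⟩,
    fun ⟨⟨hadj, hval⟩, hne⟩ => ⟨⟨hadj, hne⟩, hval⟩⟩

lemma reaches_of_restrict {e : Sym2 V} {x y : V}
    (h : reaches (G.deleteEdges {e}) (Orient.restrict e ω) x y) : reaches G ω x y :=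
  Relation.ReflTransGen.mono (fun _ _ hs => (step_restrict_iff.1 hs).1) x y h

lemma reaches_restrict_or_reaches_restrict {e : Sym2 V} {u v x y : V} (huv : step G ω u v)
    (he : s(u, v) = e) (h : reaches G ω x y) :
    reaches (G.deleteEdges {e}) (Orient.restrict e ω) x y ∨
      reaches (G.deleteEdges {e}) (Orient.restrict e ω) v y := by
  induction h using Relation.ReflTransGen.head_induction_on with
  | refl => exact Or.inl .refl
  | @head x z hxz _ ih =>
    by_cases hne : s(x, z) = e
    · rw [← he, Sym2.eq_iff] at hne
      rcases hne with ⟨-, rfl⟩ | ⟨rfl, rfl⟩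
      · exact Or.inr (ih.elim id id)
      · exact absurd hxz (step_asymm huv)
    · exact ih.imp_left (.head (step_restrict_iff.2 ⟨hxz, hne⟩))

variable {S : Finset V} {u v x : V}

lemma reachEvent_mono {T : Finset V} (h : S ⊆ T) : reachEvent G S x ⊆ reachEvent G T x :=
  fun _ ⟨s, hs, hsx⟩ => ⟨s, h hs, hsx⟩

lemma mem_reachEvent_iff_of_step_from_mem (huv : step G ω u v) (hu : u ∈ S) :
    ω ∈ reachEvent G S x ↔ Orient.restrict s(u, v) ω ∈ reachEvent _ (insert v S) x := by
  constructor
  · rintro ⟨s, hs, hsx⟩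
    exact (reaches_restrict_or_reaches_restrict huv rfl hsx).elim
      (fun h => ⟨s, mem_insert_of_mem hs, h⟩) (fun h => ⟨v, mem_insert_self v S, h⟩)
  · rintro ⟨s, hs, hsx⟩
    rcases mem_insert.1 hs with rfl | hs
    · exact ⟨u, hu, .head huv (reaches_of_restrict hsx)⟩
    · exact ⟨s, hs, reaches_of_restrict hsx⟩

lemma mem_reachEvent_iff_of_step_to_mem (hvu : step G ω v u) (hu : u ∈ S) :
    ω ∈ reachEvent G S x ↔ Orient.restrict s(u, v) ω ∈ reachEvent _ S x := by
  constructor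
  · rintro ⟨s, hs, hsx⟩
    exact (reaches_restrict_or_reaches_restrict hvu Sym2.eq_swap hsx).elim
      (fun h => ⟨s, hs, h⟩) (fun h => ⟨u, hu, h⟩)
  · rintro ⟨s, hs, hsx⟩
    exact ⟨s, hs, reaches_of_restrict hsx⟩

lemma reachEvent_eq_of_closed (hS : ∀ u ∈ S, ∀ v, G.Adj u v → v ∈ S) :
    reachEvent G S x = {_ω | x ∈ S} := by
  ext ω
  refine ⟨?_, fun hx => ⟨x, hx, .refl⟩⟩
  rintro ⟨s, hs, hsx⟩
  induction hsx with
  | refl => exact hs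
  | tail _ hyz ih => exact hS _ ih _ hyz.1

end Reachability

section Conditioning

variable {G : SimpleGraph V} (p : Sym2 V → ℝ) {S : Finset V} {u v : V}

lemma Pr_reachEvent_eq_of_adj (hu : u ∈ S) (huv : G.Adj u v) (x : V) :
    Pr G p (reachEvent G S x) =
      stepProb p u v * Pr (G.deleteEdges {s(u, v)}) p (reachEvent _ (insert v S) x) +
        (1 - stepProb p u v) * Pr (G.deleteEdges {s(u, v)}) p (reachEvent _ S x) :=
  Pr_eq_of_adj p huv _ _ _ (fun _ h => mem_reachEvent_iff_of_step_from_mem h hu)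
    (fun _ h => mem_reachEvent_iff_of_step_to_mem h hu)

lemma Pr_reachEvent_inter_eq_of_adj (hu : u ∈ S) (huv : G.Adj u v) (a b : V) :
    Pr G p (reachEvent G S a ∩ reachEvent G S b) =
      stepProb p u v * Pr (G.deleteEdges {s(u, v)}) p
          (reachEvent _ (insert v S) a ∩ reachEvent _ (insert v S) b) +
        (1 - stepProb p u v) * Pr (G.deleteEdges {s(u, v)}) p
          (reachEvent _ S a ∩ reachEvent _ S b) :=
  Pr_eq_of_adj p huv _ _ _
    (fun _ h => and_congr (mem_reachEvent_iff_of_step_from_mem h hu)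
      (mem_reachEvent_iff_of_step_from_mem h hu))
    (fun _ h => and_congr (mem_reachEvent_iff_of_step_to_mem h hu)
      (mem_reachEvent_iff_of_step_to_mem h hu))

end Conditioning

lemma Pr_reachEvent_mul_le_inter_of_closed {G : SimpleGraph V} (p : Sym2 V → ℝ) {S : Finset V}
    (hS : ∀ u ∈ S, ∀ v, G.Adj u v → v ∈ S) (a b : V) :
    Pr G p (reachEvent G S a) * Pr G p (reachEvent G S b) ≤
      Pr G p (reachEvent G S a ∩ reachEvent G S b) := by
  rw [reachEvent_eq_of_closed hS, reachEvent_eq_of_closed hS, ← Set.ofPred_and, Pr_setOf_const,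
    Pr_setOf_const, Pr_setOf_const]
  split_ifs <;> simp_all

lemma mixture_mul_mixture_le {w x₁ x₂ y₁ y₂ : ℝ} (hw₀ : 0 ≤ w) (hw₁ : w ≤ 1) (hx : x₂ ≤ x₁)
    (hy : y₂ ≤ y₁) :
    (w * x₁ + (1 - w) * x₂) * (w * y₁ + (1 - w) * y₂) ≤ w * (x₁ * y₁) + (1 - w) * (x₂ * y₂) := by
  have hprod : 0 ≤ w * (1 - w) * ((x₁ - x₂) * (y₁ - y₂)) :=
    mul_nonneg (mul_nonneg hw₀ (sub_nonneg.2 hw₁)) (mul_nonneg (sub_nonneg.2 hx) (sub_nonneg.2 hy))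
  linarith

/-- Set version: connection events from a common source set are positively
correlated in a `p`-biased random orientation. -/
theorem connections_positively_correlated_set (G : SimpleGraph V) (p : Sym2 V → ℝ)
    (hp : ∀ e ∈ G.edgeSet, 0 ≤ p e ∧ p e ≤ 1)
    (S : Finset V) (a b : V) :
    Pr G p {ω | (∃ s ∈ S, reaches G ω s a) ∧ (∃ s ∈ S, reaches G ω s b)} ≥
      Pr G p {ω | ∃ s ∈ S, reaches G ω s a} *
        Pr G p {ω | ∃ s ∈ S, reaches G ω s b} := by
  change Pr G p (reachEvent G S a) * Pr G p (reachEvent G S b) ≤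
    Pr G p (reachEvent G S a ∩ reachEvent G S b)
  by_cases hS : ∀ u ∈ S, ∀ v, G.Adj u v → v ∈ S
  · exact Pr_reachEvent_mul_le_inter_of_closed p hS a b
  push Not at hS
  obtain ⟨u, hu, v, huv, -⟩ := hS
  set G' := G.deleteEdges {s(u, v)}
  have hp' : ∀ e ∈ G'.edgeSet, 0 ≤ p e ∧ p e ≤ 1 :=
    fun e he => hp e (SimpleGraph.edgeSet_mono (G.deleteEdges_le _) he)
  have hmono (x : V) := Pr_mono hp' (reachEvent_mono (x := x) (subset_insert v S))
  have hw₀ := stepProb_nonneg (hp s(u, v) huv)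
  have hw₁ := stepProb_le_one (hp s(u, v) huv)
  rw [Pr_reachEvent_eq_of_adj p hu huv a, Pr_reachEvent_eq_of_adj p hu huv b,
    Pr_reachEvent_inter_eq_of_adj p hu huv a b]
  exact (mixture_mul_mixture_le hw₀ hw₁ (hmono a) (hmono b)).trans <| add_le_add
    (mul_le_mul_of_nonneg_left
      (connections_positively_correlated_set G' p hp' (insert v S) a b) hw₀)
    (mul_le_mul_of_nonneg_left
      (connections_positively_correlated_set G' p hp' S a b) (sub_nonneg.2 hw₁))
termination_by G.edgeFinset.card
decreasing_by all_goals exact SimpleGraph.card_edgeFinset_deleteEdges_lt huv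
end
end

section
/- Let G = (V,E) be a finite graph with p-biased random orientation, S ⊆ V nonempty, a ∉ S, and let H be the induced subgraph on V \ S with the restricted edge biases. Let T and O_S be as above. Then for every X ⊆ T with P(O_S = X) > 0, the conditional probability P(S → a | O_S = X) equals the probability that X → a in an independent p-biased random orientation of H. -/
open Classical Finset

noncomputable section

variable {V : Type*} [Fintype V] [LinearOrder V]

/-- The random out-boundary of a set `S`. -/
def outSet (G : SimpleGraph V) (ω : Orient G) (S : Set V) : Set V :=
  {v | v ∉ S ∧ ∃ u ∈ S, step G ω u v}

namespace CD

variable (G : SimpleGraph V) (S : Finset V)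

def D (e : ↥G.edgeFinset) : Prop := ∃ v ∈ (e : Sym2 V), v ∈ S

abbrev H : SimpleGraph {v : V | v ∉ S} := G.induce {v : V | v ∉ S}

lemma toG_mem (e : ↥(H G S).edgeFinset) : Sym2.map Subtype.val e.1 ∈ G.edgeFinset := by
  obtain ⟨e, he⟩ := e
  rw [SimpleGraph.mem_edgeFinset] at he ⊢
  induction e using Sym2.ind with
  | _ u v =>
    rw [Sym2.map_pair_eq, SimpleGraph.mem_edgeSet] at *
    exact he

def toG (e : ↥(H G S).edgeFinset) : ↥G.edgeFinset := ⟨Sym2.map Subtype.val e.1, toG_mem G S e⟩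

lemma notD_toG (e : ↥(H G S).edgeFinset) : ¬ D G S (toG G S e) := by
  rintro ⟨v, hv, hvS⟩
  rw [show ((toG G S e : ↥G.edgeFinset) : Sym2 V) = Sym2.map Subtype.val e.1 from rfl,
    Sym2.mem_map] at hv
  obtain ⟨u, _, rfl⟩ := hv
  exact u.2 hvS

def g (e : ↥(H G S).edgeFinset) : {e : ↥G.edgeFinset // ¬ D G S e} := ⟨toG G S e, notD_toG G S e⟩

lemma g_bij : Function.Bijective (g G S) := by
  constructor
  · intro a b hab
    apply Subtype.ext
    exact Sym2.map.injective Subtype.val_injective (congrArg (fun x => ((x.1 : ↥G.edgeFinset) : Sym2 V)) hab)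
  · rintro ⟨⟨e, he⟩, hD⟩
    induction e using Sym2.ind with
    | _ u v =>
      have hu : u ∉ (S : Set V) := fun h => hD ⟨u, Sym2.mem_mk_left u v, h⟩
      have hv : v ∉ (S : Set V) := fun h => hD ⟨v, Sym2.mem_mk_right u v, h⟩
      have hadj : G.Adj u v := (SimpleGraph.mem_edgeSet G).mp (SimpleGraph.mem_edgeFinset.mp he)
      have hmem : s((⟨u, hu⟩ : {v : V | v ∉ S}), (⟨v, hv⟩ : {v : V | v ∉ S})) ∈ (H G S).edgeFinset := by
        rw [SimpleGraph.mem_edgeFinset, SimpleGraph.mem_edgeSet]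
        exact hadj
      refine ⟨⟨_, hmem⟩, Subtype.ext (Subtype.ext ?_)⟩
      exact Sym2.map_pair_eq Subtype.val _ _

def edgeEquiv : ↥(H G S).edgeFinset ≃ {e : ↥G.edgeFinset // ¬ D G S e} :=
  Equiv.ofBijective _ (g_bij G S)

def Phi : Orient G ≃ (({e : ↥G.edgeFinset // D G S e} → Bool) × Orient (H G S)) where
  toFun ω := ⟨fun e => ω e.1, fun e => ω (toG G S e)⟩
  invFun bh e := if h : D G S e then bh.1 ⟨e, h⟩ else bh.2 ((edgeEquiv G S).symm ⟨e, h⟩)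
  left_inv ω := by
    funext e
    by_cases h : D G S e
    · simp only [h, dif_pos]
    · simp only [h, dif_neg, not_false_iff]
      exact congrArg ω (congrArg Subtype.val ((edgeEquiv G S).apply_symm_apply ⟨e, h⟩))
  right_inv bh := by
    refine Prod.ext ?_ ?_
    · funext e
      show (if h : D G S e.1 then bh.1 ⟨e.1, h⟩ else _) = bh.1 e
      rw [dif_pos e.2]
    · funext e
      show (if h : D G S (toG G S e) then bh.1 ⟨toG G S e, h⟩
          else bh.2 ((edgeEquiv G S).symm ⟨toG G S e, h⟩)) = bh.2 e
      rw [dif_neg (notD_toG G S e)]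
      exact congrArg bh.2 ((edgeEquiv G S).symm_apply_apply e)

def wtD (p : Sym2 V → ℝ) (b : {e : ↥G.edgeFinset // D G S e} → Bool) : ℝ :=
  ∏ e : {e : ↥G.edgeFinset // D G S e}, if b e then p e.1 else 1 - p e.1

lemma wt_eq (p : Sym2 V → ℝ) (ω : Orient G) :
    wt G p ω = wtD G S p (Phi G S ω).1 *
      wt (H G S) (fun e => p (Sym2.map Subtype.val e)) (Phi G S ω).2 := by
  unfold wt wtD
  rw [← Fintype.prod_subtype_mul_prod_subtype (D G S) (fun e => if ω e then p e else 1 - p e)]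
  congr 1
  rw [← Equiv.prod_comp (edgeEquiv G S) (fun x => if ω x.1 then p x.1 else 1 - p x.1)]
  exact Finset.prod_congr rfl (fun i _ => rfl)

lemma step_agree {ω ω' : Orient G} (h : ∀ e, D G S e → ω e = ω' e) {u v : V} (hu : u ∈ S)
    (hs : step G ω u v) : step G ω' u v := by
  obtain ⟨hadj, hval⟩ := hs
  refine ⟨hadj, ?_⟩
  rw [← h _ ⟨u, Sym2.mem_mk_left u v, hu⟩]
  exact hval

lemma outSet_agree {ω ω' : Orient G} (h : ∀ e, D G S e → ω e = ω' e) :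
    outSet G ω ↑S = outSet G ω' ↑S := by
  have h' : ∀ e, D G S e → ω' e = ω e := fun e he => (h e he).symm
  ext v
  constructor <;> rintro ⟨hv, u, hu, hs⟩
  · exact ⟨hv, u, hu, step_agree G S h hu hs⟩
  · exact ⟨hv, u, hu, step_agree G S h' hu hs⟩

lemma val_eq (ω : Orient G) (u v : {v : V | v ∉ S}) (h1) (h2) :
    (Phi G S ω).2 ⟨s(u, v), h1⟩ = ω ⟨s((u : V), (v : V)), h2⟩ := by
  show ω (toG G S ⟨s(u, v), h1⟩) = _
  exact congrArg ω (Subtype.ext (Sym2.map_pair_eq Subtype.val u v))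

lemma step_iff (ω : Orient G) (u v : {v : V | v ∉ S}) :
    step (H G S) ((Phi G S ω).2) u v ↔ step G ω ↑u ↑v := by
  have hd : (decide (u < v)) = decide ((u : V) < (v : V)) :=
    decide_eq_decide.mpr Subtype.coe_lt_coe.symm
  constructor
  · rintro ⟨h, hv⟩
    refine ⟨h, ?_⟩
    rw [← val_eq G S ω u v (SimpleGraph.mem_edgeFinset.mpr ((SimpleGraph.mem_edgeSet _).mpr h)), hv, hd]
  · rintro ⟨h, hv⟩
    refine ⟨h, ?_⟩
    rw [val_eq G S ω u v _ (SimpleGraph.mem_edgeFinset.mpr ((SimpleGraph.mem_edgeSet _).mpr h)), hv, hd]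

lemma reaches_lift (ω : Orient G) {u v : {v : V | v ∉ S}}
    (h : reaches (H G S) ((Phi G S ω).2) u v) : reaches G ω ↑u ↑v := by
  induction h with
  | refl => exact .refl
  | tail _ hbc ih => exact ih.tail ((step_iff G S ω _ _).mp hbc)

lemma reach_main (ω : Orient G) (X : Finset V) (hω : outSet G ω ↑S = ↑X)
    {s y : V} (hs : s ∈ S) (h : reaches G ω s y) :
    y ∈ S ∨ ∃ (hy : y ∉ S) (x : {v : V | v ∉ S}),
      ↑x ∈ X ∧ reaches (H G S) ((Phi G S ω).2) x ⟨y, hy⟩ := by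
  induction h with
  | refl => exact Or.inl hs
  | @tail b c hab hbc ih =>
    by_cases hc : c ∈ S
    · exact Or.inl hc
    · refine Or.inr ⟨hc, ?_⟩
      rcases ih with hbS | ⟨hb, x, hxX, hreach⟩
      · have hcX : c ∈ outSet G ω ↑S := ⟨hc, b, hbS, hbc⟩
        rw [hω] at hcX
        exact ⟨⟨c, hc⟩, hcX, .refl⟩
      · exact ⟨x, hxX, hreach.tail ((step_iff G S ω ⟨b, hb⟩ ⟨c, hc⟩).mpr hbc)⟩

lemma event_iff (ω : Orient G) (X : Finset V) (hω : outSet G ω ↑S = ↑X)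
    (a : V) (ha : a ∉ S) :
    (∃ s ∈ S, reaches G ω s a) ↔
      ∃ x : {v : V | v ∉ S}, ↑x ∈ X ∧ reaches (H G S) ((Phi G S ω).2) x ⟨a, ha⟩ := by
  constructor
  · rintro ⟨s, hs, h⟩
    rcases reach_main G S ω X hω hs h with h | ⟨hy, x, hxX, hr⟩
    · exact absurd h ha
    · exact ⟨x, hxX, hr⟩
  · rintro ⟨x, hxX, hr⟩
    have hxO : (x : V) ∈ outSet G ω ↑S := by rw [hω]; exact hxX
    obtain ⟨_, u, huS, hstep⟩ := hxO
    exact ⟨u, huS, .head hstep (reaches_lift G S ω hr)⟩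

lemma sum_boolfun {ι : Type*} [Fintype ι] [DecidableEq ι] (f : ι → ℝ) :
    ∑ g : ι → Bool, ∏ i, (if g i then f i else 1 - f i) = 1 := by
  rw [← Fintype.prod_sum (fun (i : ι) (b : Bool) => if b then f i else 1 - f i)]
  have : ∀ i : ι, (∑ b : Bool, if b then f i else 1 - f i) = 1 := by
    intro i
    rw [Fintype.sum_bool]
    simp
  simp [this]

end CD

set_option maxHeartbeats 1000000

/-- Conditionally on `O_S = X`, the event `S → a` has the probability of
`X → a` in an independent random orientation of `H = G - S`. -/
theorem conditional_decomposition (G : SimpleGraph V) (p : Sym2 V → ℝ)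
    (hp : ∀ e ∈ G.edgeSet, 0 ≤ p e ∧ p e ≤ 1)
    (S : Finset V) (hS : S.Nonempty) (a : V) (ha : a ∉ S)
    (X : Finset V) (hX : ∀ v ∈ X, v ∉ S ∧ ∃ u ∈ S, G.Adj u v)
    (hpos : 0 < Pr G p {ω | outSet G ω ↑S = ↑X}) :
    Pr G p ({ω | ∃ s ∈ S, reaches G ω s a} ∩ {ω | outSet G ω ↑S = ↑X}) /
        Pr G p {ω | outSet G ω ↑S = ↑X} =
      Pr (G.induce {v : V | v ∉ S}) (fun e => p (Sym2.map Subtype.val e))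
        {ω' | ∃ x : {v : V | v ∉ S}, ↑x ∈ X ∧
          reaches (G.induce {v : V | v ∉ S}) ω' x ⟨a, ha⟩} := by
  classical
  let Hp : Sym2 {v : V | v ∉ S} → ℝ := fun e => p (Sym2.map Subtype.val e)
  let A : Set (Orient G) := {ω | ∃ s ∈ S, reaches G ω s a}
  let B : Set (Orient G) := {ω | outSet G ω ↑S = ↑X}
  let C : Set (Orient (CD.H G S)) :=
    {ω' | ∃ x : {v : V | v ∉ S}, ↑x ∈ X ∧ reaches (CD.H G S) ω' x ⟨a, ha⟩}
  let Bs : Set ({e : ↥G.edgeFinset // CD.D G S e} → Bool) :=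
    {b | outSet G ((CD.Phi G S).symm (b, fun _ => true)) ↑S = ↑X}
  have symm_app : ∀ (b) (h) (e) (he : CD.D G S e), (CD.Phi G S).symm (b, h) e = b ⟨e, he⟩ := by
    intro b h e he
    show (if hh : CD.D G S e then b ⟨e, hh⟩ else _) = _
    rw [dif_pos he]
  have memB : ∀ b h, ((CD.Phi G S).symm (b, h) ∈ B) ↔ b ∈ Bs := by
    intro b h
    show outSet G _ ↑S = ↑X ↔ outSet G _ ↑S = ↑X
    rw [CD.outSet_agree G S
      (fun e he => (symm_app b h e he).trans (symm_app b (fun _ => true) e he).symm)]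
  have PhiSymm1 : ∀ b h, (CD.Phi G S ((CD.Phi G S).symm (b, h))).1 = b :=
    fun b h => congrArg Prod.fst ((CD.Phi G S).apply_symm_apply (b, h))
  have PhiSymm2 : ∀ b h, (CD.Phi G S ((CD.Phi G S).symm (b, h))).2 = h :=
    fun b h => congrArg Prod.snd ((CD.Phi G S).apply_symm_apply (b, h))
  have memA : ∀ b h, b ∈ Bs → (((CD.Phi G S).symm (b, h)) ∈ A ↔ h ∈ C) := by
    intro b h hb
    have hB : outSet G ((CD.Phi G S).symm (b, h)) ↑S = ↑X := (memB b h).mpr hb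
    have := CD.event_iff G S ((CD.Phi G S).symm (b, h)) X hB a ha
    rw [PhiSymm2 b h] at this
    exact this
  have wtfac : ∀ b h, wt G p ((CD.Phi G S).symm (b, h)) =
      CD.wtD G S p b * wt (CD.H G S) Hp h := by
    intro b h
    rw [CD.wt_eq G S p, PhiSymm1, PhiSymm2]
  have key : ∀ bh : ({e : ↥G.edgeFinset // CD.D G S e} → Bool) × Orient (CD.H G S),
      (A ∩ B).indicator (wt G p) ((CD.Phi G S).symm bh)
        = Bs.indicator (CD.wtD G S p) bh.1 * C.indicator (wt (CD.H G S) Hp) bh.2 := by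
    rintro ⟨b, h⟩
    rw [Set.indicator_apply, Set.indicator_apply, Set.indicator_apply]
    by_cases hb : b ∈ Bs
    · by_cases hc : h ∈ C
      · rw [if_pos, if_pos hb, if_pos hc, wtfac]
        exact ⟨(memA b h hb).mpr hc, (memB b h).mpr hb⟩
      · rw [if_neg, if_neg hc, mul_zero]
        rintro ⟨hA, -⟩; exact hc ((memA b h hb).mp hA)
    · rw [if_neg, if_neg hb, zero_mul]
      rintro ⟨-, hB⟩; exact hb ((memB b h).mp hB)
  have keyB : ∀ bh : ({e : ↥G.edgeFinset // CD.D G S e} → Bool) × Orient (CD.H G S),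
      B.indicator (wt G p) ((CD.Phi G S).symm bh)
        = Bs.indicator (CD.wtD G S p) bh.1 * wt (CD.H G S) Hp bh.2 := by
    rintro ⟨b, h⟩
    rw [Set.indicator_apply, Set.indicator_apply]
    by_cases hb : b ∈ Bs
    · rw [if_pos ((memB b h).mpr hb), if_pos hb, wtfac]
    · rw [if_neg (fun hB => hb ((memB b h).mp hB)), if_neg hb, zero_mul]
  have hsum : ∀ F : Orient G → ℝ, ∑ ω : Orient G, F ω
      = ∑ bh : ({e : ↥G.edgeFinset // CD.D G S e} → Bool) × Orient (CD.H G S),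
          F ((CD.Phi G S).symm bh) :=
    fun F => (Equiv.sum_comp (CD.Phi G S).symm F).symm
  have hone : ∑ h : Orient (CD.H G S), wt (CD.H G S) Hp h = 1 := by
    have h2 : (∑ g : (↥(CD.H G S).edgeFinset → Bool),
        ∏ e : ↥(CD.H G S).edgeFinset, (if g e then Hp ↑e else 1 - Hp ↑e)) = 1 :=
      CD.sum_boolfun _
    exact Eq.trans (Fintype.sum_equiv (Equiv.refl _) _ _ (fun h => rfl)) h2
  have hPrAB : Pr G p (A ∩ B) =
      (∑ b, Bs.indicator (CD.wtD G S p) b) * Pr (CD.H G S) Hp C := by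
    unfold Pr
    rw [hsum, Fintype.sum_congr _ _ key, Fintype.sum_prod_type, ← Finset.sum_mul_sum]
  have hPrB : Pr G p B = ∑ b, Bs.indicator (CD.wtD G S p) b := by
    unfold Pr
    rw [hsum, Fintype.sum_congr _ _ keyB, Fintype.sum_prod_type, ← Finset.sum_mul_sum, hone,
      mul_one]
  have hne : Pr G p B ≠ 0 := ne_of_gt hpos
  show Pr G p (A ∩ B) / Pr G p B = Pr (CD.H G S) Hp C
  rw [hPrAB, ← hPrB, mul_comm, mul_div_assoc, div_self hne, mul_one]
end
end
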